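/- arXiv:2311.16440 — 2 statements merged into one kernel-verified Lean document; each statement's English description precedes it below -/
import Mathlib

section
/- Let r, R be positive integers with R ≥ r, A an r×r real symmetric positive definite matrix, and H an R×r real matrix of rank r (equivalently, Hᵀ H is invertible). Then the first-order regularization bias of the rescaled Tikhonov-regularization function is −A⁻¹ (Hᵀ H)⁻¹ A⁻¹: writing f̃(x) := Hᵀ (H A Hᵀ + x I_R)⁻¹ H, the quotient x⁻¹ (f̃(x) − A⁻¹) converges, as x → 0⁺, to −A⁻¹ (Hᵀ H)⁻¹ A⁻¹ in matrix norm. -/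
/-!
Since `Hᵀ H` is invertible, the push-through identity
`(A + x (Hᵀ H)⁻¹) Hᵀ = (Hᵀ H)⁻¹ Hᵀ (H A Hᵀ + x I)` gives
`Hᵀ (H A Hᵀ + x I)⁻¹ H = (A + x (Hᵀ H)⁻¹)⁻¹` for every `x > 0`. The bias quotient is therefore
the difference quotient at `0` of `x ↦ (A + x B)⁻¹` with `B = (Hᵀ H)⁻¹`, which by the resolvent
identity equals `-(A + x B)⁻¹ B A⁻¹` and tends to `-A⁻¹ B A⁻¹`.
-/

open Filter Topology

namespace Matrix

variable {m n : Type*} [Fintype n] [DecidableEq n]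

theorem isUnit_of_rank_eq_card {K : Type*} [Field K] {M : Matrix n n K}
    (hM : M.rank = Fintype.card n) : IsUnit M := by
  rw [← mulVec_surjective_iff_isUnit]
  refine (LinearMap.range_eq_top (f := M.mulVecLin)).mp (Submodule.eq_top_of_finrank_eq ?_)
  rw [Module.finrank_fintype_fun_eq_card]
  exact hM

theorem mul_inv_add_smul_one_mul [Fintype m] [DecidableEq m] {R : Type*} [CommRing R]
    (A : Matrix n n R) (G : Matrix n m R) (H : Matrix m n R) (x : R)
    (hGH : IsUnit (G * H).det) (hM : IsUnit (H * A * G + x • 1).det) :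
    G * (H * A * G + x • 1)⁻¹ * H = (A + x • (G * H)⁻¹)⁻¹ := by
  set B := (G * H)⁻¹
  set M := H * A * G + x • 1
  have hBGH : B * (G * H) = 1 := nonsing_inv_mul _ hGH
  have push_through : (A + x • B) * G = B * G * M := by
    simp only [M, Matrix.mul_add, Matrix.add_mul, Matrix.mul_smul, Matrix.smul_mul,
      Matrix.mul_one, ← Matrix.mul_assoc]
    rw [Matrix.mul_assoc B G H, hBGH, Matrix.one_mul]
  refine (inv_eq_right_inv ?_).symm
  calc (A + x • B) * (G * M⁻¹ * H) = B * G * (M * M⁻¹) * H := by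
        simp only [← Matrix.mul_assoc, push_through]
    _ = 1 := by rw [mul_nonsing_inv _ hM, Matrix.mul_one, Matrix.mul_assoc, hBGH]

theorem tendsto_inv_smul_inv_add_smul_sub_inv {𝕜 : Type*} [NontriviallyNormedField 𝕜]
    {A : Matrix n n 𝕜} (hA : IsUnit A.det) (B : Matrix n n 𝕜) :
    Tendsto (fun x : 𝕜 => x⁻¹ • ((A + x • B)⁻¹ - A⁻¹)) (𝓝[≠] 0) (𝓝 (-(A⁻¹ * B * A⁻¹))) := by
  have hpath : Continuous fun x : 𝕜 => A + x • B := by fun_prop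
  have hinv : Tendsto (fun x : 𝕜 => (A + x • B)⁻¹) (𝓝 0) (𝓝 A⁻¹) := by
    have hinvA : ContinuousAt Inv.inv A := continuousAt_matrix_inv _ <| by
      simpa [Ring.inverse_eq_inv'] using continuousAt_inv₀ hA.ne_zero
    exact hinvA.tendsto.comp (by simpa using hpath.tendsto 0)
  have hunit : ∀ᶠ x in 𝓝 (0 : 𝕜), IsUnit (A + x • B).det := by
    have hdet : ContinuousAt (fun x : 𝕜 => (A + x • B).det) 0 := hpath.matrix_det.continuousAt
    filter_upwards [hdet.eventually_ne (by simpa using hA.ne_zero)] with x hx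
    exact hx.isUnit
  have hlim : Tendsto (fun x : 𝕜 => -((A + x • B)⁻¹ * B * A⁻¹)) (𝓝[≠] 0)
      (𝓝 (-(A⁻¹ * B * A⁻¹))) :=
    ((hinv.mul_const B).mul_const A⁻¹).neg.mono_left nhdsWithin_le_nhds
  refine hlim.congr' ?_
  filter_upwards [self_mem_nhdsWithin, nhdsWithin_le_nhds hunit] with x hx0 hx
  have resolvent : (A + x • B)⁻¹ - A⁻¹ = -(x • ((A + x • B)⁻¹ * B * A⁻¹)) := by
    rw [inv_sub_inv <| iff_of_true ((isUnit_iff_isUnit_det _).mpr hx)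
      ((isUnit_iff_isUnit_det _).mpr hA)]
    simp
  rw [resolvent, smul_neg, smul_smul, inv_mul_cancel₀ hx0, one_smul]

end Matrix

open Matrix

theorem rescaled_tikhonov_first_order_bias_general (r R : ℕ)
    (A : Matrix (Fin r) (Fin r) ℝ) (hA : A.PosDef)
    (H : Matrix (Fin R) (Fin r) ℝ) (hH : H.rank = r) :
    Filter.Tendsto
      (fun x : ℝ => x⁻¹ •
        (Hᵀ * (H * A * Hᵀ + x • (1 : Matrix (Fin R) (Fin R) ℝ))⁻¹ * H - A⁻¹))
      (nhdsWithin 0 (Set.Ioi 0)) (nhds (-(A⁻¹ * (Hᵀ * H)⁻¹ * A⁻¹))) := by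
  have hHHdet : IsUnit (Hᵀ * H).det := (isUnit_iff_isUnit_det _).mp <|
    isUnit_of_rank_eq_card (by rw [rank_transpose_mul_self, hH, Fintype.card_fin])
  have hAdet : IsUnit A.det := (isUnit_iff_isUnit_det _).mp hA.isUnit
  refine ((tendsto_inv_smul_inv_add_smul_sub_inv hAdet (Hᵀ * H)⁻¹).mono_left
    (nhdsWithin_mono _ fun x (hx : 0 < x) => hx.ne')).congr' ?_
  filter_upwards [self_mem_nhdsWithin] with x (hx : 0 < x)
  have hM : (H * A * Hᵀ + x • 1).PosDef := by
    refine PosDef.posSemidef_add ?_ (PosDef.one.smul hx)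
    simpa using hA.posSemidef.mul_mul_conjTranspose_same H
  rw [mul_inv_add_smul_one_mul A Hᵀ H x hHHdet ((isUnit_iff_isUnit_det _).mp hM.isUnit)]

/-- First-order regularization bias of the rescaled Tikhonov-regularization function:
for `R ≥ r`, `A` an `r × r` real symmetric positive definite matrix, and `H` an `R × r`
real matrix of rank `r`, writing `f̃(x) = Hᵀ (H A Hᵀ + x I_R)⁻¹ H`, the quotient
`x⁻¹ (f̃(x) − A⁻¹)` converges to `−A⁻¹ (Hᵀ H)⁻¹ A⁻¹` as `x → 0⁺`. -/
theorem rescaled_tikhonov_first_order_bias (r R : ℕ) (hr : 0 < r) (hrR : r ≤ R)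
    (A : Matrix (Fin r) (Fin r) ℝ) (hA : A.PosDef)
    (H : Matrix (Fin R) (Fin r) ℝ) (hH : H.rank = r) :
    Filter.Tendsto
      (fun x : ℝ => x⁻¹ •
        (Hᵀ * (H * A * Hᵀ + x • (1 : Matrix (Fin R) (Fin R) ℝ))⁻¹ * H - A⁻¹))
      (nhdsWithin 0 (Set.Ioi 0)) (nhds (-(A⁻¹ * (Hᵀ * H)⁻¹ * A⁻¹))) :=
  rescaled_tikhonov_first_order_bias_general r R A hA H hH
end

section
/- Let r, R be positive integers, A an r×r real symmetric positive definite matrix, and H an R×r real matrix. Then for every real x > 0, the deviation of the rescaled Tikhonov-regularization function from its x = 0 value satisfies the explicit bound ‖Hᵀ (H A Hᵀ + x I_R)⁻¹ H − A⁻¹‖ ≤ x · ‖A⁻¹‖ · ‖(x I_r + A Hᵀ H)⁻¹‖, where ‖·‖ denotes the ℓ₂ operator norm of a matrix. -/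
open Matrix

/-- The ℓ₂ operator norm of a square real matrix: the operator norm of the associated
continuous linear map on Euclidean space, i.e. `sup {‖Mv‖₂ : ‖v‖₂ ≤ 1}`. -/
noncomputable def l2OpNorm {n : ℕ} (M : Matrix (Fin n) (Fin n) ℝ) : ℝ :=
  ‖(Matrix.toEuclideanCLM (𝕜 := ℝ) (n := Fin n) M :
      EuclideanSpace ℝ (Fin n) →L[ℝ] EuclideanSpace ℝ (Fin n))‖

/-!
Write `M = H A Hᵀ + x I_R` and `N = x I_r + A Hᵀ H`. The push-through identity `M H = H N`
gives `M⁻¹ H = H N⁻¹`, and `A⁻¹ N = x A⁻¹ + Hᵀ H`, so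
`Hᵀ M⁻¹ H - A⁻¹ = (A⁻¹ N - x A⁻¹) N⁻¹ - A⁻¹ = -x A⁻¹ N⁻¹`.
The bound is then submultiplicativity of the operator norm. Positive definiteness of `A` makes
`M` positive definite and `N = A (x A⁻¹ + Hᵀ H)` a product of invertible matrices.
-/

open scoped Matrix.Norms.L2Operator ComplexOrder

namespace Matrix

section CommRing

variable {m n K : Type*} [Fintype m] [Fintype n] [DecidableEq m] [DecidableEq n] [CommRing K]

theorem inv_mul_eq_mul_inv_of_mul_eq {M : Matrix m m K} {N : Matrix n n K} {H : Matrix m n K}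
    (hM : IsUnit M) (hN : IsUnit N) (h : M * H = H * N) : M⁻¹ * H = H * N⁻¹ := by
  have hM' := (isUnit_iff_isUnit_det M).mp hM
  have hN' := (isUnit_iff_isUnit_det N).mp hN
  calc M⁻¹ * H = M⁻¹ * H * (N * N⁻¹) := by rw [mul_nonsing_inv _ hN', Matrix.mul_one]
    _ = M⁻¹ * (M * H) * N⁻¹ := by rw [h]; simp only [Matrix.mul_assoc]
    _ = H * N⁻¹ := by rw [nonsing_inv_mul_cancel_left _ _ hM']

theorem add_smul_one_mul_eq_mul_smul_one_add (H : Matrix m n K) (B : Matrix n m K) (x : K) :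
    (H * B + x • 1) * H = H * (x • 1 + B * H) := by
  rw [Matrix.add_mul, Matrix.mul_add, Matrix.mul_assoc, smul_mul, Matrix.one_mul, Matrix.mul_smul,
    Matrix.mul_one, add_comm]

theorem mul_inv_mul_sub_inv_eq_neg_smul {A : Matrix n n K} {G : Matrix n m K} {H : Matrix m n K}
    {x : K} (hA : IsUnit A) (hM : IsUnit (H * A * G + x • 1))
    (hN : IsUnit (x • 1 + A * G * H)) :
    G * (H * A * G + x • 1)⁻¹ * H - A⁻¹ = -x • (A⁻¹ * (x • 1 + A * G * H)⁻¹) := by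
  have push : (H * A * G + x • 1)⁻¹ * H = H * (x • 1 + A * G * H)⁻¹ :=
    inv_mul_eq_mul_inv_of_mul_eq hM hN <| by
      simpa only [Matrix.mul_assoc] using add_smul_one_mul_eq_mul_smul_one_add H (A * G) x
  set N := x • 1 + A * G * H
  have hA' := (isUnit_iff_isUnit_det A).mp hA
  have hN' := (isUnit_iff_isUnit_det N).mp hN
  have hGH : G * H = A⁻¹ * N - x • A⁻¹ := by
    rw [Matrix.mul_add, Matrix.mul_smul, Matrix.mul_one, Matrix.mul_assoc,
      nonsing_inv_mul_cancel_left _ _ hA', add_sub_cancel_left]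
  calc G * (H * A * G + x • 1)⁻¹ * H - A⁻¹ = G * H * N⁻¹ - A⁻¹ := by
        rw [Matrix.mul_assoc, push, Matrix.mul_assoc]
    _ = -x • (A⁻¹ * N⁻¹) := by
        rw [hGH, Matrix.sub_mul, Matrix.mul_assoc, mul_nonsing_inv _ hN', Matrix.mul_one,
          smul_mul, neg_smul]
        abel

end CommRing

section RCLike

variable {m n 𝕜 : Type*} [Fintype m] [Fintype n] [RCLike 𝕜]

theorem PosSemidef.posDef_mul_mul_conjTranspose_add_smul_one [DecidableEq m] {A : Matrix n n 𝕜}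
    (hA : A.PosSemidef) (H : Matrix m n 𝕜) {x : 𝕜} (hx : 0 < x) :
    (H * A * Hᴴ + x • 1).PosDef :=
  PosDef.posSemidef_add (hA.mul_mul_conjTranspose_same H) (PosDef.one.smul hx)

theorem PosDef.isUnit_smul_one_add_mul [DecidableEq n] {A B : Matrix n n 𝕜} (hA : A.PosDef)
    (hB : B.PosSemidef) {x : 𝕜} (hx : 0 < x) : IsUnit (x • 1 + A * B) := by
  have hfactor : x • 1 + A * B = A * (x • A⁻¹ + B) := by
    rw [Matrix.mul_add, Matrix.mul_smul,
      mul_nonsing_inv _ ((isUnit_iff_isUnit_det A).mp hA.isUnit)]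
  rw [hfactor]
  exact hA.isUnit.mul ((hA.inv.smul hx).add_posSemidef hB).isUnit

end RCLike

end Matrix

theorem l2OpNorm_eq_norm {n : ℕ} (M : Matrix (Fin n) (Fin n) ℝ) : l2OpNorm M = ‖M‖ := rfl

theorem rescaled_tikhonov_deviation_bound_general (r R : ℕ)
    (A : Matrix (Fin r) (Fin r) ℝ) (hA : A.PosDef)
    (H : Matrix (Fin R) (Fin r) ℝ) :
    ∀ x : ℝ, 0 < x →
      l2OpNorm (Hᵀ * (H * A * Hᵀ + x • (1 : Matrix (Fin R) (Fin R) ℝ))⁻¹ * H - A⁻¹)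
        ≤ x * l2OpNorm A⁻¹
            * l2OpNorm (x • (1 : Matrix (Fin r) (Fin r) ℝ) + A * Hᵀ * H)⁻¹ := by
  intro x hx
  have hM : IsUnit (H * A * Hᵀ + x • 1) := by
    simpa only [conjTranspose_eq_transpose_of_trivial] using
      (hA.posSemidef.posDef_mul_mul_conjTranspose_add_smul_one H hx).isUnit
  have hN : IsUnit (x • 1 + A * Hᵀ * H) := by
    simpa only [Matrix.mul_assoc, conjTranspose_eq_transpose_of_trivial] using
      hA.isUnit_smul_one_add_mul (posSemidef_conjTranspose_mul_self H) hx
  simp only [l2OpNorm_eq_norm]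
  rw [mul_inv_mul_sub_inv_eq_neg_smul hA.isUnit hM hN, norm_smul, norm_neg,
    Real.norm_of_nonneg hx.le, mul_assoc]
  gcongr
  exact norm_mul_le _ _

/-- Explicit bound for the deviation of the rescaled Tikhonov-regularization function from
its `x = 0` value: for `A` an `r × r` real symmetric positive definite matrix, `H` an
`R × r` real matrix, and `x > 0`,
`‖Hᵀ (H A Hᵀ + x I_R)⁻¹ H − A⁻¹‖ ≤ x · ‖A⁻¹‖ · ‖(x I_r + A Hᵀ H)⁻¹‖`
in the ℓ₂ operator norm. -/
theorem rescaled_tikhonov_deviation_bound (r R : ℕ) (hr : 0 < r) (hR : 0 < R)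
    (A : Matrix (Fin r) (Fin r) ℝ) (hA : A.PosDef)
    (H : Matrix (Fin R) (Fin r) ℝ) :
    ∀ x : ℝ, 0 < x →
      l2OpNorm (Hᵀ * (H * A * Hᵀ + x • (1 : Matrix (Fin R) (Fin R) ℝ))⁻¹ * H - A⁻¹)
        ≤ x * l2OpNorm A⁻¹
            * l2OpNorm (x • (1 : Matrix (Fin r) (Fin r) ℝ) + A * Hᵀ * H)⁻¹ :=
  rescaled_tikhonov_deviation_bound_general r R A hA H
end
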